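/- Let 0<α<2, c>0, s(y)=c·|y|^{-(1+α)} for y≠0, and let H:ℝ→ℝ be a Schwartz function. Then for every p with 0 ≤ p < (1+α)/2, one has sup_{x∈ℝ} (1+x²)^p·|Δ^{α/2}H(x)| < ∞, and moreover (1+x²)^p·Δ^{α/2}H(x) → 0 as |x| → ∞. -/

import Mathlib

open MeasureTheory

/-- The fractional Laplacian of `H` with kernel `s y = c * |y| ^ (-(1+α))`
(the integrand vanishes at `y = 0` since `0 ^ (-(1+α)) = 0`). -/
noncomputable def fracLap (α c : ℝ) (H : ℝ → ℝ) (x : ℝ) : ℝ :=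
  (1 / 2) * ∫ y : ℝ, c * |y| ^ (-(1 + α)) * (H (x + y) - 2 * H x + H (x - y))

/-!
After symmetrisation, `Δ^{α/2} H (x) = ∫₀^∞ c t^{-1-α} (H (x + t) - 2 H x + H (x - t)) dt`.
Split the integral at `r = (1 + |x|)/2`. For `t ≤ r` the second difference is at most
`2 t² sup_{B(x, r)} |H''|`, and `|H''| = O((1 + |x|)⁻³)` on that ball since every point of it has
`1 + |t| ≥ r`. For `t > r` the kernel is at most `c r^{-1-α}` against the integrable `|H (x ± t)|`,
plus `2 c |H x| ∫_r^∞ t^{-1-α} dt` with `|H x| = O((1 + |x|)⁻¹)`. Every term is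
`O((1 + |x|)^{-1-α}) = O((1 + x²)^{-(1+α)/2})`, and `p < (1 + α)/2` leaves a negative power of
`1 + x²` after weighting.
-/

open Set Metric Filter Topology

theorem abs_second_difference_le {f : ℝ → ℝ} (hf : ContDiff ℝ 2 f) {x y M : ℝ}
    (hM : ∀ t ∈ closedBall x |y|, |iteratedDeriv 2 f t| ≤ M) :
    |f (x + y) - 2 * f x + f (x - y)| ≤ 2 * M * y ^ 2 := by
  have hf1 : Differentiable ℝ f := hf.differentiable (by norm_num)
  have hf2 : Differentiable ℝ (deriv f) := by
    simpa [iteratedDeriv_one] using hf.differentiable_iteratedDeriv 1 (by norm_num)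
  have hM0 : 0 ≤ M := (abs_nonneg _).trans (hM x (mem_closedBall_self (abs_nonneg y)))
  have hmem : ∀ u, |u| ≤ |y| → x + u ∈ closedBall x |y| := fun u hu => by
    simpa [Real.dist_eq] using hu
  have hderiv_sub : ∀ s ∈ closedBall (0 : ℝ) |y|,
      ‖deriv f (x + s) - deriv f (x - s)‖ ≤ 2 * M * |y| := by
    intro s hs
    rw [mem_closedBall_zero_iff, Real.norm_eq_abs] at hs
    calc ‖deriv f (x + s) - deriv f (x - s)‖ ≤ M * ‖(x + s) - (x - s)‖ :=
          (convex_closedBall x |y|).norm_image_sub_le_of_norm_deriv_le (fun t _ => hf2 t)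
            (fun t ht => by simpa [iteratedDeriv_succ, iteratedDeriv_one] using hM t ht)
            (by simpa [sub_eq_add_neg] using hmem (-s) (by rwa [abs_neg])) (hmem s hs)
      _ = M * (2 * |s|) := by
          rw [Real.norm_eq_abs, show x + s - (x - s) = 2 * s by ring, abs_mul, abs_two]
      _ ≤ 2 * M * |y| := by nlinarith
  have hsym : ∀ s, HasDerivAt (fun s => f (x + s) + f (x - s))
      (deriv f (x + s) - deriv f (x - s)) s := by
    intro s
    rw [sub_eq_add_neg]
    exact ((hf1 _).hasDerivAt.comp_const_add x s).fun_add ((hf1 _).hasDerivAt.comp_const_sub x s)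
  have hmvt := (convex_closedBall (0 : ℝ) |y|).norm_image_sub_le_of_norm_hasDerivWithin_le
    (fun s _ => (hsym s).hasDerivWithinAt) hderiv_sub (mem_closedBall_self (abs_nonneg y))
    (by rw [mem_closedBall_zero_iff, Real.norm_eq_abs])
  calc |f (x + y) - 2 * f x + f (x - y)|
      = ‖(f (x + y) + f (x - y)) - (f (x + 0) + f (x - 0))‖ := by
        rw [Real.norm_eq_abs]; ring_nf
    _ ≤ 2 * M * |y| * ‖y - 0‖ := hmvt
    _ = 2 * M * y ^ 2 := by rw [sub_zero, Real.norm_eq_abs, mul_assoc, ← sq, sq_abs]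

noncomputable def fracLapIntegrand (α c : ℝ) (f : ℝ → ℝ) (x t : ℝ) : ℝ :=
  c * t ^ (-(1 + α)) * (f (x + t) - 2 * f x + f (x - t))

section FracLapEstimate

variable {α c : ℝ} {f : ℝ → ℝ} {x : ℝ}

theorem measurable_fracLapIntegrand (hf : Continuous f) :
    Measurable (fracLapIntegrand α c f x) := by
  unfold fracLapIntegrand; fun_prop

theorem fracLap_eq_setIntegral_Ioi :
    fracLap α c f x = ∫ t in Ioi 0, fracLapIntegrand α c f x t := by
  have heven : ∀ y : ℝ, c * |y| ^ (-(1 + α)) * (f (x + y) - 2 * f x + f (x - y)) =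
      fracLapIntegrand α c f x |y| := by
    intro y
    rcases abs_choice y with h | h <;> rw [fracLapIntegrand, h]
    rw [sub_neg_eq_add, ← sub_eq_add_neg]; ring
  rw [fracLap, funext heven, integral_comp_abs (f := fracLapIntegrand α c f x)]
  ring

theorem integrableOn_Ioc_fracLapIntegrand_and_abs_setIntegral_le (hα2 : α < 2) (hc : 0 ≤ c)
    (hf : ContDiff ℝ 2 f) {r M : ℝ} (hr : 0 ≤ r)
    (hM : ∀ t ∈ closedBall x r, |iteratedDeriv 2 f t| ≤ M) :
    IntegrableOn (fracLapIntegrand α c f x) (Ioc 0 r) ∧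
      |∫ t in Ioc 0 r, fracLapIntegrand α c f x t| ≤ 2 * c * M * (r ^ (2 - α) / (2 - α)) := by
  have hint : IntegrableOn (fun t : ℝ => t ^ (1 - α)) (Ioc 0 r) :=
    (intervalIntegrable_iff_integrableOn_Ioc_of_le hr).mp
      (intervalIntegral.intervalIntegrable_rpow' (by linarith))
  have hval : ∫ t in Ioc 0 r, t ^ (1 - α) = r ^ (2 - α) / (2 - α) := by
    rw [← intervalIntegral.integral_of_le hr, integral_rpow (Or.inl (by linarith)),
      Real.zero_rpow (by linarith), sub_zero, show 1 - α + 1 = 2 - α by ring]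
  have hbound : ∀ t ∈ Ioc 0 r, ‖fracLapIntegrand α c f x t‖ ≤ 2 * c * M * t ^ (1 - α) := by
    rintro t ⟨ht0, htr⟩
    have hsecond := abs_second_difference_le hf (x := x) (y := t) (M := M)
      (fun s hs => hM s (closedBall_subset_closedBall (by rwa [abs_of_pos ht0]) hs))
    have hpow : t ^ (-(1 + α)) * t ^ 2 = t ^ (1 - α) := by
      rw [← Real.rpow_two, ← Real.rpow_add ht0]; ring_nf
    rw [fracLapIntegrand, Real.norm_eq_abs, abs_mul, abs_mul, abs_of_nonneg hc,
      abs_of_pos (Real.rpow_pos_of_pos ht0 _), ← hpow]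
    calc c * t ^ (-(1 + α)) * |f (x + t) - 2 * f x + f (x - t)|
        ≤ c * t ^ (-(1 + α)) * (2 * M * t ^ 2) := by gcongr
      _ = _ := by ring
  have hdom := hint.const_mul (2 * c * M)
  have hbound_ae := ae_restrict_of_forall_mem (μ := volume) measurableSet_Ioc hbound
  refine ⟨hdom.mono' (measurable_fracLapIntegrand hf.continuous).aestronglyMeasurable hbound_ae,
    ?_⟩
  calc _ ≤ ∫ t in Ioc 0 r, 2 * c * M * t ^ (1 - α) := norm_integral_le_of_norm_le hdom hbound_ae
    _ = _ := by rw [integral_const_mul, hval]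

theorem integrableOn_Ioi_fracLapIntegrand_and_abs_setIntegral_le (hα0 : 0 < α) (hc : 0 ≤ c)
    (hf : Continuous f) (hfi : Integrable f) {r : ℝ} (hr : 0 < r) :
    IntegrableOn (fracLapIntegrand α c f x) (Ioi r) ∧
      |∫ t in Ioi r, fracLapIntegrand α c f x t| ≤
        c * r ^ (-(1 + α)) * (2 * ∫ t, |f t|) + 2 * c * |f x| * (r ^ (-α) / α) := by
  set A : ℝ → ℝ := fun t => |f (x + t)| + |f (x - t)|
  have hA : Integrable A := (hfi.abs.comp_add_left x).add (hfi.abs.comp_sub_left x)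
  have hA_integral : ∫ t, A t = 2 * ∫ t, |f t| := by
    rw [integral_add (hfi.abs.comp_add_left x) (hfi.abs.comp_sub_left x),
      integral_add_left_eq_self (fun t => |f t|) x,
      integral_sub_left_eq_self (fun t => |f t|) volume x, two_mul]
  have htail := integrableOn_Ioi_rpow_of_lt (a := -(1 + α)) (by linarith) hr
  have hdom : IntegrableOn (fun t => c * r ^ (-(1 + α)) * A t + 2 * c * |f x| * t ^ (-(1 + α)))
      (Ioi r) := (hA.integrableOn.const_mul _).add (htail.const_mul _)
  have hbound : ∀ t ∈ Ioi r, ‖fracLapIntegrand α c f x t‖ ≤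
      c * r ^ (-(1 + α)) * A t + 2 * c * |f x| * t ^ (-(1 + α)) := by
    intro t (ht : r < t)
    have hpow : t ^ (-(1 + α)) ≤ r ^ (-(1 + α)) :=
      Real.rpow_le_rpow_of_nonpos hr ht.le (by linarith)
    have hdiff : |f (x + t) - 2 * f x + f (x - t)| ≤ A t + 2 * |f x| := by
      have h₁ := abs_add_le (f (x + t) - 2 * f x) (f (x - t))
      have h₂ := abs_sub (f (x + t)) (2 * f x)
      rw [abs_mul, abs_two] at h₂
      simp only [A]
      linarith
    have hA_nonneg : 0 ≤ A t := by positivity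
    have htpos : 0 < t ^ (-(1 + α)) := Real.rpow_pos_of_pos (hr.trans ht) _
    rw [fracLapIntegrand, Real.norm_eq_abs, abs_mul, abs_mul, abs_of_nonneg hc, abs_of_pos htpos]
    calc c * t ^ (-(1 + α)) * |f (x + t) - 2 * f x + f (x - t)|
        ≤ c * t ^ (-(1 + α)) * (A t + 2 * |f x|) := by gcongr
      _ ≤ c * r ^ (-(1 + α)) * A t + 2 * c * |f x| * t ^ (-(1 + α)) := by
        nlinarith [mul_le_mul_of_nonneg_left (mul_le_mul_of_nonneg_right hpow hA_nonneg) hc]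
  have hbound_ae := ae_restrict_of_forall_mem (μ := volume) measurableSet_Ioi hbound
  refine ⟨hdom.mono' (measurable_fracLapIntegrand hf).aestronglyMeasurable hbound_ae, ?_⟩
  calc _ ≤ ∫ t in Ioi r, c * r ^ (-(1 + α)) * A t + 2 * c * |f x| * t ^ (-(1 + α)) :=
        norm_integral_le_of_norm_le hdom hbound_ae
    _ = c * r ^ (-(1 + α)) * (∫ t in Ioi r, A t) + 2 * c * |f x| * (r ^ (-α) / α) := by
        rw [integral_add (hA.integrableOn.const_mul _) (htail.const_mul _), integral_const_mul,
          integral_const_mul, integral_Ioi_rpow_of_lt (by linarith) hr,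
          show -(1 + α) + 1 = -α by ring, neg_div_neg_eq]
    _ ≤ _ := by
        rw [← hA_integral]
        gcongr
        · exact Eventually.of_forall fun t => by positivity
        · exact Measure.restrict_le_self

theorem abs_fracLap_le (hα0 : 0 < α) (hα2 : α < 2) (hc : 0 ≤ c) (hf : ContDiff ℝ 2 f)
    (hfi : Integrable f) {r M : ℝ} (hr : 0 < r)
    (hM : ∀ t ∈ closedBall x r, |iteratedDeriv 2 f t| ≤ M) :
    |fracLap α c f x| ≤ 2 * c * M * (r ^ (2 - α) / (2 - α)) +
      c * r ^ (-(1 + α)) * (2 * ∫ t, |f t|) + 2 * c * |f x| * (r ^ (-α) / α) := by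
  obtain ⟨hnear_int, hnear⟩ :=
    integrableOn_Ioc_fracLapIntegrand_and_abs_setIntegral_le hα2 hc hf hr.le hM
  obtain ⟨hfar_int, hfar⟩ :=
    integrableOn_Ioi_fracLapIntegrand_and_abs_setIntegral_le (x := x) hα0 hc hf.continuous hfi hr
  rw [fracLap_eq_setIntegral_Ioi, ← Ioc_union_Ioi_eq_Ioi hr.le,
    setIntegral_union (Ioc_disjoint_Ioi le_rfl) measurableSet_Ioi hnear_int hfar_int, add_assoc]
  exact (abs_add_le _ _).trans (add_le_add hnear hfar)

end FracLapEstimate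

theorem SchwartzMap.exists_one_add_abs_pow_mul_abs_iteratedDeriv_le (H : SchwartzMap ℝ ℝ)
    (k n : ℕ) : ∃ C, ∀ t, (1 + |t|) ^ k * |iteratedDeriv n H t| ≤ C :=
  ⟨_, fun t => by
    simpa [norm_iteratedFDeriv_eq_norm_iteratedDeriv] using
      SchwartzMap.one_add_le_sup_seminorm_apply (𝕜 := ℝ) (m := (k, n)) le_rfl le_rfl H t⟩

theorem one_add_sq_rpow_le_one_add_abs_rpow {x e : ℝ} (he : 0 ≤ e) :
    (1 + x ^ 2) ^ e ≤ (1 + |x|) ^ (2 * e) := by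
  rw [Real.rpow_mul (by positivity), Real.rpow_two]
  gcongr
  nlinarith [sq_abs x, abs_nonneg x]

theorem SchwartzMap.exists_abs_fracLap_le {α c : ℝ} (hα0 : 0 < α) (hα2 : α < 2) (hc : 0 ≤ c)
    (H : SchwartzMap ℝ ℝ) :
    ∃ K, ∀ x, |fracLap α c H x| ≤ K * (1 + x ^ 2) ^ (-((1 + α) / 2)) := by
  obtain ⟨C₁, hC₁⟩ := H.exists_one_add_abs_pow_mul_abs_iteratedDeriv_le 1 0
  obtain ⟨C₃, hC₃⟩ := H.exists_one_add_abs_pow_mul_abs_iteratedDeriv_le 3 2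
  have hC₁0 : 0 ≤ C₁ := (by positivity : (0 : ℝ) ≤ _).trans (hC₁ 0)
  have hC₃0 : 0 ≤ C₃ := (by positivity : (0 : ℝ) ≤ _).trans (hC₃ 0)
  have h2α : 0 < 2 - α := by linarith
  set L := ∫ t, |H t|
  have hL : 0 ≤ L := integral_nonneg fun t => abs_nonneg _
  refine ⟨c * (2 * C₃ / (2 - α) + 2 * L + C₁ / α) * 2 ^ (1 + α), fun x => ?_⟩
  set r := (1 + |x|) / 2 with hr_def
  have hr : 0 < r := by positivity
  have hM : ∀ t ∈ closedBall x r, |iteratedDeriv 2 H t| ≤ C₃ / r ^ 3 := by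
    intro t ht
    have hrt : r ≤ 1 + |t| := by
      have := abs_sub_abs_le_abs_sub x t
      rw [mem_closedBall, Real.dist_eq, abs_sub_comm] at ht
      linarith [hr_def]
    rw [le_div_iff₀ (by positivity), mul_comm]
    exact (mul_le_mul_of_nonneg_right (by gcongr) (abs_nonneg _)).trans (hC₃ t)
  have hHx : |H x| ≤ C₁ / (2 * r) := by
    rw [le_div_iff₀ (by positivity), mul_comm, show 2 * r = 1 + |x| by ring]
    simpa using hC₁ x
  have hweight : r ^ (-(1 + α)) ≤ 2 ^ (1 + α) * (1 + x ^ 2) ^ (-((1 + α) / 2)) := by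
    have h := one_add_sq_rpow_le_one_add_abs_rpow (x := x) (e := (1 + α) / 2) (by positivity)
    rw [show 2 * ((1 + α) / 2) = 1 + α by ring, show 1 + |x| = 2 * r by ring,
      Real.mul_rpow zero_le_two hr.le] at h
    rw [Real.rpow_neg hr.le, Real.rpow_neg (by positivity), ← div_eq_mul_inv,
      le_div_iff₀ (by positivity), inv_mul_eq_div, div_le_iff₀ (by positivity)]
    exact h
  have e₁ : r ^ (2 - α) = r ^ (-(1 + α)) * r ^ 3 := by
    rw [← Real.rpow_natCast, ← Real.rpow_add hr]; norm_num; ring_nf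
  have e₂ : r ^ (-α) = r ^ (-(1 + α)) * r := by
    rw [← Real.rpow_add_one hr.ne']; ring_nf
  calc |fracLap α c H x|
      ≤ 2 * c * (C₃ / r ^ 3) * (r ^ (2 - α) / (2 - α)) + c * r ^ (-(1 + α)) * (2 * L) +
          2 * c * |H x| * (r ^ (-α) / α) :=
        abs_fracLap_le hα0 hα2 hc (H.smooth 2) H.integrable hr hM
    _ ≤ 2 * c * (C₃ / r ^ 3) * (r ^ (2 - α) / (2 - α)) + c * r ^ (-(1 + α)) * (2 * L) +
          2 * c * (C₁ / (2 * r)) * (r ^ (-α) / α) := by gcongr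
    _ = c * (2 * C₃ / (2 - α) + 2 * L + C₁ / α) * r ^ (-(1 + α)) := by
        rw [e₁, e₂]; field_simp
    _ ≤ _ := by rw [mul_assoc _ (2 ^ (1 + α))]; gcongr

theorem bounded_and_tendsto_zero_of_abs_le_mul_one_add_sq_rpow {g : ℝ → ℝ} {K e p : ℝ}
    (hp : p < e) (hg : ∀ x, |g x| ≤ K * (1 + x ^ 2) ^ (-e)) :
    (∃ M, ∀ x, (1 + x ^ 2) ^ p * |g x| ≤ M) ∧
      Tendsto (fun x => (1 + x ^ 2) ^ p * g x) (cocompact ℝ) (𝓝 0) := by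
  have hbase : ∀ x : ℝ, 1 ≤ 1 + x ^ 2 := fun x => le_add_of_nonneg_right (sq_nonneg x)
  have hpos : ∀ x : ℝ, 0 < 1 + x ^ 2 := fun x => zero_lt_one.trans_le (hbase x)
  have hK : 0 ≤ K := by simpa using (abs_nonneg _).trans (hg 0)
  have hweighted : ∀ x, (1 + x ^ 2) ^ p * |g x| ≤ K * (1 + x ^ 2) ^ (p - e) := fun x => by
    rw [sub_eq_add_neg, Real.rpow_add (hpos x), mul_left_comm]
    exact mul_le_mul_of_nonneg_left (hg x) (Real.rpow_nonneg (hpos x).le p)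
  refine ⟨⟨K, fun x => ?_⟩,
    squeeze_zero_norm (a := fun x => K * (1 + x ^ 2) ^ (p - e)) (fun x => ?_) ?_⟩
  · calc (1 + x ^ 2) ^ p * |g x| ≤ K * (1 + x ^ 2) ^ (p - e) := hweighted x
      _ ≤ K * 1 := by
          gcongr
          exact Real.rpow_le_one_of_one_le_of_nonpos (hbase x) (by linarith)
      _ = K := mul_one K
  · rw [Real.norm_eq_abs, abs_mul, abs_of_pos (Real.rpow_pos_of_pos (hpos x) p)]
    exact hweighted x
  · have hsq : Tendsto (fun x : ℝ => 1 + x ^ 2) (cocompact ℝ) atTop := by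
      refine tendsto_atTop_add_const_left _ 1 ?_
      convert (tendsto_pow_atTop two_ne_zero).comp (tendsto_norm_cocompact_atTop (E := ℝ)) using 1
      ext x
      simp [Real.norm_eq_abs]
    simpa using ((tendsto_rpow_neg_atTop (by linarith : 0 < e - p)).comp hsq).const_mul K

theorem fracLap_weighted_bounded_vanishing_general
    (α c p : ℝ) (hα0 : 0 < α) (hα2 : α < 2) (hc : 0 < c)
    (hp : p < (1 + α) / 2) (H : SchwartzMap ℝ ℝ) :
    (∃ M : ℝ, ∀ x : ℝ, (1 + x ^ 2) ^ p * |fracLap α c ⇑H x| ≤ M) ∧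
    Filter.Tendsto (fun x : ℝ => (1 + x ^ 2) ^ p * fracLap α c ⇑H x)
      (Filter.cocompact ℝ) (nhds 0) := by
  obtain ⟨K, hK⟩ := H.exists_abs_fracLap_le hα0 hα2 hc.le
  exact bounded_and_tendsto_zero_of_abs_le_mul_one_add_sq_rpow hp hK

/-- For `0 < α < 2`, `c > 0`, a Schwartz function `H` and
`0 ≤ p < (1+α)/2`, the weighted function `(1+x²)^p * Δ^{α/2}H(x)` is bounded
and vanishes at infinity. -/
theorem fracLap_weighted_bounded_vanishing
    (α c p : ℝ) (hα0 : 0 < α) (hα2 : α < 2) (hc : 0 < c)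
    (hp0 : 0 ≤ p) (hp : p < (1 + α) / 2) (H : SchwartzMap ℝ ℝ) :
    (∃ M : ℝ, ∀ x : ℝ, (1 + x ^ 2) ^ p * |fracLap α c ⇑H x| ≤ M) ∧
    Filter.Tendsto (fun x : ℝ => (1 + x ^ 2) ^ p * fracLap α c ⇑H x)
      (Filter.cocompact ℝ) (nhds 0) :=
  fracLap_weighted_bounded_vanishing_general α c p hα0 hα2 hc hp H
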